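/- arXiv:1307.6431 — 8 statements merged into one kernel-verified Lean document; each statement's English description precedes it below -/
import Mathlib

section
/- Let Γ be totally ordered, (Y,d,Γ_Y) a subspace of the complete ultrametric space (X,d,Γ) with Γ_Y• coinitial in Γ•, d(Y×Y) = Γ_Y, d(X×X) = Γ. Then there exists a complete subspace S of X in which Y is dense (a completion of Y in X). -/
/-!
The completion is the closure `S` of `Y` in `X`. It is complete because it is closed in the
complete space `X`: a chain of balls of `S` with centres in `S` is, by the ultrametric
inequality, also a chain of balls of `X`, and the point of their intersection in `X` lies within
every positive radius of some centre in `S`, hence belongs to `S`.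
-/

/-- A subspace S of X is complete: every chain of balls of S whose radii have
infimum 0 has nonempty intersection. -/
def IsCompleteSubspace {X Γ : Type*} [LinearOrder Γ] [OrderBot Γ]
    (d : X → X → Γ) (S : Set X) : Prop :=
  ∀ (I : Type) (a : I → X) (γ : I → Γ),
    (∀ i, a i ∈ S) → (∀ i, γ i ≠ ⊥) →
    IsChain (· ⊆ ·) (Set.range fun i => {w ∈ S | d (a i) w ≤ γ i}) →
    (∀ ε : Γ, ε ≠ ⊥ → ∃ i, γ i < ε) →
    (⋂ i, {w ∈ S | d (a i) w ≤ γ i}).Nonempty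

/-- Y is dense in the subspace S. -/
def IsDenseIn {X Γ : Type*} [LinearOrder Γ] [OrderBot Γ]
    (d : X → X → Γ) (Y S : Set X) : Prop :=
  Y ⊆ S ∧ ∀ x ∈ S, ∀ γ : Γ, γ ≠ ⊥ → ∃ y ∈ Y, d x y < γ

open Set

def closureIn {X Γ : Type*} [LinearOrder Γ] [OrderBot Γ] (d : X → X → Γ) (Y : Set X) :
    Set X :=
  {x | ∀ γ : Γ, γ ≠ ⊥ → ∃ y ∈ Y, d x y < γ}

section Ultrametric

variable {X Γ : Type*} [LinearOrder Γ] {d : X → X → Γ}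

lemma ball_subset_ball_of_dist_le (hd3 : ∀ x y z, d x z ≤ max (d x y) (d y z)) {a b : X}
    {γ γ' : Γ} (hba : d b a ≤ γ') (hγ : γ ≤ γ') :
    {w | d a w ≤ γ} ⊆ {w | d b w ≤ γ'} :=
  fun w hw => (hd3 b a w).trans (max_le hba (le_trans hw hγ))

variable [OrderBot Γ]

lemma subset_closureIn (hd_self : ∀ x, d x x = ⊥) (Y : Set X) : Y ⊆ closureIn d Y :=
  fun y hy _ hγ => ⟨y, hy, (hd_self y).symm ▸ bot_lt_iff_ne_bot.2 hγ⟩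

lemma closureIn_closureIn_subset (hd3 : ∀ x y z, d x z ≤ max (d x y) (d y z)) (Y : Set X) :
    closureIn d (closureIn d Y) ⊆ closureIn d Y := by
  intro x hx γ hγ
  obtain ⟨s, hs, hxs⟩ := hx γ hγ
  obtain ⟨y, hy, hsy⟩ := hs γ hγ
  exact ⟨y, hy, (hd3 x s y).trans_lt (max_lt hxs hsy)⟩

lemma dist_le_of_balls_total (hd_self : ∀ x, d x x = ⊥) (hd2 : ∀ x y, d x y = d y x)
    {S : Set X} {a b : X} (ha : a ∈ S) (hb : b ∈ S) {γ γ' : Γ} (hγ : γ ≤ γ')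
    (h : {w ∈ S | d a w ≤ γ} ⊆ {w ∈ S | d b w ≤ γ'} ∨
      {w ∈ S | d b w ≤ γ'} ⊆ {w ∈ S | d a w ≤ γ}) :
    d b a ≤ γ' := by
  rcases h with h | h
  · exact (h ⟨ha, (hd_self a).symm ▸ bot_le⟩).2
  · exact (hd2 b a).trans_le ((h ⟨hb, (hd_self b).symm ▸ bot_le⟩).2.trans hγ)

lemma isChain_range_balls_univ (hd_self : ∀ x, d x x = ⊥) (hd2 : ∀ x y, d x y = d y x)
    (hd3 : ∀ x y z, d x z ≤ max (d x y) (d y z)) {S : Set X} {I : Type} {a : I → X}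
    {γ : I → Γ} (haS : ∀ i, a i ∈ S)
    (hchain : IsChain (· ⊆ ·) (range fun i => {w ∈ S | d (a i) w ≤ γ i})) :
    IsChain (· ⊆ ·) (range fun i => {w ∈ (univ : Set X) | d (a i) w ≤ γ i}) := by
  rintro _ ⟨i, rfl⟩ _ ⟨j, rfl⟩ -
  have hsub {k l : I} (hkl : γ k ≤ γ l) :
      {w ∈ (univ : Set X) | d (a k) w ≤ γ k} ⊆ {w ∈ univ | d (a l) w ≤ γ l} := by
    have hlk := dist_le_of_balls_total hd_self hd2 (haS k) (haS l) hkl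
      (hchain.total ⟨k, rfl⟩ ⟨l, rfl⟩)
    exact fun w hw => ⟨trivial, ball_subset_ball_of_dist_le hd3 hlk hkl hw.2⟩
  rcases le_total (γ i) (γ j) with hij | hji
  · exact .inl (hsub hij)
  · exact .inr (hsub hji)

lemma isCompleteSubspace_of_closureIn_subset (hd_self : ∀ x, d x x = ⊥)
    (hd2 : ∀ x y, d x y = d y x) (hd3 : ∀ x y z, d x z ≤ max (d x y) (d y z))
    (hX : IsCompleteSubspace d (univ : Set X)) {S : Set X} (hS : closureIn d S ⊆ S) :
    IsCompleteSubspace d S := by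
  intro I a γ haS hγ hchain hcof
  obtain ⟨w, hw⟩ := hX I a γ (fun _ => trivial) hγ
    (isChain_range_balls_univ hd_self hd2 hd3 haS hchain) hcof
  simp only [mem_iInter, mem_sep_iff] at hw
  have hwS : w ∈ S := hS fun ε hε => by
    obtain ⟨i, hi⟩ := hcof ε hε
    exact ⟨a i, haS i, ((hd2 w (a i)).trans_le (hw i).2).trans_lt hi⟩
  exact ⟨w, mem_iInter.2 fun i => ⟨hwS, (hw i).2⟩⟩

end Ultrametric

theorem stmt_10_general {X Γ : Type*} [LinearOrder Γ] [OrderBot Γ]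
    (d : X → X → Γ)
    (hd1 : ∀ x y : X, d x y = ⊥ ↔ x = y)
    (hd2 : ∀ x y : X, d x y = d y x)
    (hd3 : ∀ x y z : X, d x z ≤ max (d x y) (d y z))
    (hX : IsCompleteSubspace d (Set.univ : Set X))
    (Y : Set X) :
    ∃ S : Set X, IsCompleteSubspace d S ∧ IsDenseIn d Y S := by
  have hd_self : ∀ x, d x x = ⊥ := fun x => (hd1 x x).2 rfl
  exact ⟨closureIn d Y,
    isCompleteSubspace_of_closureIn_subset hd_self hd2 hd3 hX (closureIn_closureIn_subset hd3 Y),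
    subset_closureIn hd_self Y, fun _ hx => hx⟩

/-- Existence of a completion of Y inside the complete space X: there is a
complete subspace S of X in which Y is dense. -/
theorem stmt_10 {X Γ : Type*} [LinearOrder Γ] [OrderBot Γ]
    (d : X → X → Γ)
    (hd1 : ∀ x y : X, d x y = ⊥ ↔ x = y)
    (hd2 : ∀ x y : X, d x y = d y x)
    (hd3 : ∀ x y z : X, d x z ≤ max (d x y) (d y z))
    (hX : IsCompleteSubspace d (Set.univ : Set X))
    (Y : Set X) (hY : Y.Nonempty)
    (hcoin : ∀ γ : Γ, γ ≠ ⊥ → ∃ y ∈ Y, ∃ y' ∈ Y, d y y' ≠ ⊥ ∧ d y y' ≤ γ) :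
    ∃ S : Set X, IsCompleteSubspace d S ∧ IsDenseIn d Y S :=
  stmt_10_general d hd1 hd2 hd3 hX Y
end

section
/- Let X be a principally complete ultrametric space and φ: X → X strictly contracting. Then φ has exactly one fixed point. -/
/-!
If `φ` had no fixed point, every ball `B(x, φ x)` would be a principal ball. Whenever
`z ∈ B(x, φ x)`, the ultrametric inequality gives `B(z, φ z) ⊆ B(x, φ x)`, so principal
completeness makes every chain of such balls bounded below by another one, and Zorn's lemma
yields a minimal one, `B(x, φ x)`. Then `B(φ x, φ² x) = B(x, φ x)` contains `x`, i.e.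
`d(φ x, x) ≤ d(φ x, φ² x) < d(x, φ x)`, which is absurd. Uniqueness is immediate from strict
contraction.
-/

namespace Ultrametric

variable {X Γ : Type*} [Preorder Γ] (d : X → X → Γ)

def principalBall (x y : X) : Set X := {w | d x w ≤ d x y}

def PrincipallyComplete : Prop :=
  ∀ C : Set (Set X), (∀ B ∈ C, ∃ x y : X, x ≠ y ∧ B = principalBall d x y) →
    IsChain (· ⊆ ·) C → (⋂₀ C).Nonempty

def StrictlyContracting (φ : X → X) : Prop :=
  ∀ x x' : X, x ≠ x' → d (φ x) (φ x') < d x x'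

variable {d}

theorem right_mem_principalBall (x y : X) : y ∈ principalBall d x y :=
  le_rfl

theorem mem_principalBall_self [OrderBot Γ] (hd0 : ∀ x : X, d x x = ⊥) (x y : X) :
    x ∈ principalBall d x y :=
  (hd0 x).trans_le bot_le

theorem StrictlyContracting.map_le [OrderBot Γ] (hd0 : ∀ x : X, d x x = ⊥)
    {φ : X → X} (hφ : StrictlyContracting d φ) (x x' : X) : d (φ x) (φ x') ≤ d x x' := by
  rcases eq_or_ne x x' with rfl | hne
  · exact (hd0 _).trans_le bot_le
  · exact (hφ x x' hne).le

theorem StrictlyContracting.subsingleton_fixedPoints {φ : X → X}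
    (hφ : StrictlyContracting d φ) {y z : X} (hy : φ y = y) (hz : φ z = z) : y = z := by
  by_contra hne
  simpa [hy, hz] using hφ y z hne

section

variable (hd2 : ∀ x y : X, d x y = d y x)
  (hd3 : ∀ (γ : Γ) (x y z : X), d x y ≤ γ → d y z ≤ γ → d x z ≤ γ)
include hd2 hd3

theorem dist_map_le_of_mem_principalBall {φ : X → X} (hφ : ∀ x x', d (φ x) (φ x') ≤ d x x')
    {x z : X} (hz : z ∈ principalBall d x (φ x)) : d z (φ z) ≤ d x (φ x) := by
  have hzx : d z x ≤ d x (φ x) := hd2 z x ▸ hz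
  have hxφz : d x (φ z) ≤ d x (φ x) := hd3 _ _ _ _ le_rfl ((hφ x z).trans hz)
  exact hd3 _ _ _ _ hzx hxφz

theorem principalBall_map_subset {φ : X → X} (hφ : ∀ x x', d (φ x) (φ x') ≤ d x x')
    {x z : X} (hz : z ∈ principalBall d x (φ x)) :
    principalBall d z (φ z) ⊆ principalBall d x (φ x) := fun _ hw =>
  hd3 _ _ _ _ hz (hw.trans (dist_map_le_of_mem_principalBall hd2 hd3 hφ hz))

end

theorem exists_fixedPoint_of_principallyComplete [OrderBot Γ]
    (hd0 : ∀ x : X, d x x = ⊥) (hd2 : ∀ x y : X, d x y = d y x)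
    (hd3 : ∀ (γ : Γ) (x y z : X), d x y ≤ γ → d y z ≤ γ → d x z ≤ γ)
    (hpc : PrincipallyComplete d) {φ : X → X} (hφ : StrictlyContracting d φ) :
    ∃ z, φ z = z := by
  by_contra! hno
  have hle := hφ.map_le hd0
  let S := Set.range fun x => principalBall d x (φ x)
  have hchain : ∀ c ⊆ S, IsChain (· ⊆ ·) c → ∃ lb ∈ S, ∀ s ∈ c, lb ⊆ s := by
    intro c hcS hc
    have hprincipal : ∀ B ∈ c, ∃ x y : X, x ≠ y ∧ B = principalBall d x y := by
      intro B hB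
      obtain ⟨x, rfl⟩ := hcS hB
      exact ⟨x, φ x, (hno x).symm, rfl⟩
    obtain ⟨z, hz⟩ := hpc c hprincipal hc
    refine ⟨_, ⟨z, rfl⟩, fun s hs => ?_⟩
    obtain ⟨x, rfl⟩ := hcS hs
    exact principalBall_map_subset hd2 hd3 hle (hz _ hs)
  obtain ⟨_, hmin⟩ := zorn_superset S hchain
  obtain ⟨x, rfl⟩ := hmin.prop
  have hball : principalBall d (φ x) (φ (φ x)) = principalBall d x (φ x) :=
    hmin.eq_of_subset ⟨φ x, rfl⟩
      (principalBall_map_subset hd2 hd3 hle (right_mem_principalBall x (φ x)))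
  have hx : x ∈ principalBall d (φ x) (φ (φ x)) := hball ▸ mem_principalBall_self hd0 x (φ x)
  have hlt : d (φ x) (φ (φ x)) < d (φ x) x := hd2 x (φ x) ▸ hφ x (φ x) (hno x).symm
  exact (hlt.trans_le hx).false

end Ultrametric

open Ultrametric in
/-- Fixed Point Theorem: a strictly contracting self-map of a principally
complete ultrametric space has exactly one fixed point. -/
theorem stmt_12 {X Γ : Type*} [PartialOrder Γ] [OrderBot Γ]
    (d : X → X → Γ)
    (hd1 : ∀ x y : X, d x y = ⊥ ↔ x = y)
    (hd2 : ∀ x y : X, d x y = d y x)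
    (hd3 : ∀ (γ : Γ) (x y z : X), d x y ≤ γ → d y z ≤ γ → d x z ≤ γ)
    (hpc : ∀ C : Set (Set X),
      (∀ B ∈ C, ∃ x y : X, x ≠ y ∧ B = {w : X | d x w ≤ d x y}) →
      IsChain (· ⊆ ·) C → (⋂₀ C).Nonempty)
    (φ : X → X)
    (hφ : ∀ x x' : X, x ≠ x' → d (φ x) (φ x') < d x x') :
    ∃! z : X, φ z = z := by
  obtain ⟨z, hz⟩ := exists_fixedPoint_of_principallyComplete
    (fun x => (hd1 x x).mpr rfl) hd2 hd3 hpc hφ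
  exact ⟨z, hz, fun y hy => StrictlyContracting.subsingleton_fixedPoints hφ hy hz⟩
end

section
/- Let X be a principally complete ultrametric space (with Γ• having no least element and X having at least two points), φ: X → X strictly contracting with fixed point z, and y ∈ X, y ≠ z. Then either there exists a family α ∈ P with a₀ = y that reaches z, or there exists an asymptotic approximation α ∈ P to z with a₀ = y. -/
/-- Membership in the set 𝒫 of families: α = (a_ι)_{ι<λ} with
(i) a_{ι+1} = φ(a_ι) ≠ a_ι whenever ι+1 < λ;
(ii) (d(a_ι, a_{ι+1}))_{ι+1<λ} strictly decreasing;
(iii) for limit μ < λ, d(a_μ, a_ι) ≤ d(a_ι, a_{ι+1}) for all ι < μ. -/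
def MemP {X Γ : Type*} [PartialOrder Γ] [OrderBot Γ]
    (d : X → X → Γ) (φ : X → X) (lam : Ordinal) (a : Ordinal → X) : Prop :=
  (∀ ι : Ordinal, ι + 1 < lam → a (ι + 1) = φ (a ι) ∧ φ (a ι) ≠ a ι) ∧
  (∀ ι κ : Ordinal, ι < κ → κ + 1 < lam →
    d (a κ) (a (κ + 1)) < d (a ι) (a (ι + 1))) ∧
  (∀ μ : Ordinal, Order.IsSuccLimit μ → μ < lam →
    ∀ ι : Ordinal, ι < μ → d (a μ) (a ι) ≤ d (a ι) (a (ι + 1)))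

/-!
The fixed point `z` lies in every ball `B(x) = B_{d(x, φ x)}(x)`. Otherwise the balls `B(w)`,
`w ∈ B(x)`, are nested, closed under `w ↦ φ w`, and every chain of them has a lower bound by
principal completeness, so Zorn gives a minimal one `B(w)`. Then `B(w) = B(φ w)` puts `w` in `B(φ w)`,
contradicting `d(φ w, φ² w) < d(w, φ w)`.

So the orbit `y, φ y, φ² y, …`, cut off where it first hits `z`, or else followed by `z` at stage
`ω`, is a family in `𝒫` reaching `z`: condition (iii) at `ω` says precisely `z ∈ B(φᵐ y)`.
-/

section Ball

variable {X Γ : Type*} [PartialOrder Γ] {d : X → X → Γ} {φ : X → X}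

def stepBall (d : X → X → Γ) (φ : X → X) (x : X) : Set X :=
  {w | d x w ≤ d x (φ x)}

lemma apply_mem_stepBall (x : X) : φ x ∈ stepBall d φ x :=
  le_rfl

lemma self_mem_stepBall [OrderBot Γ] (hd1 : ∀ x y : X, d x y = ⊥ ↔ x = y) (x : X) :
    x ∈ stepBall d φ x := by
  show d x x ≤ _
  exact (hd1 x x).2 rfl ▸ bot_le

lemma stepBall_subset_stepBall (hd2 : ∀ x y : X, d x y = d y x)
    (hd3 : ∀ (γ : Γ) (x y z : X), d x y ≤ γ → d y z ≤ γ → d x z ≤ γ)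
    (hφ : ∀ x x' : X, x ≠ x' → d (φ x) (φ x') < d x x') {x w : X}
    (hw : w ∈ stepBall d φ x) : stepBall d φ w ⊆ stepBall d φ x := by
  have hradius : d w (φ w) ≤ d x (φ x) := by
    rcases eq_or_ne x w with rfl | hxw
    · exact le_rfl
    have hwφx : d w (φ x) ≤ d x (φ x) := hd3 _ w x (φ x) (hd2 w x ▸ hw) le_rfl
    exact hd3 _ w (φ x) (φ w) hwφx ((hφ x w hxw).trans_le hw).le
  exact fun t ht => hd3 _ x w t hw (le_trans ht hradius)

lemma apply_ne_self_of_ne_fixedPt (hφ : ∀ x x' : X, x ≠ x' → d (φ x) (φ x') < d x x') {z w : X}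
    (hz : φ z = z) (hw : w ≠ z) : φ w ≠ w := by
  intro hfix
  simpa [hfix, hz] using hφ w z hw

theorem fixedPt_mem_stepBall [OrderBot Γ] (hd1 : ∀ x y : X, d x y = ⊥ ↔ x = y)
    (hd2 : ∀ x y : X, d x y = d y x)
    (hd3 : ∀ (γ : Γ) (x y z : X), d x y ≤ γ → d y z ≤ γ → d x z ≤ γ)
    (hpc : ∀ C : Set (Set X),
      (∀ B ∈ C, ∃ x y : X, x ≠ y ∧ B = {w : X | d x w ≤ d x y}) →
      IsChain (· ⊆ ·) C → (⋂₀ C).Nonempty)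
    (hφ : ∀ x x' : X, x ≠ x' → d (φ x) (φ x') < d x x') {z : X} (hz : φ z = z) (x : X) :
    z ∈ stepBall d φ x := by
  by_contra hzx
  have hnest : ∀ {x w : X}, w ∈ stepBall d φ x → stepBall d φ w ⊆ stepBall d φ x :=
    stepBall_subset_stepBall hd2 hd3 hφ
  have hmoves : ∀ w ∈ stepBall d φ x, φ w ≠ w := fun w hw =>
    apply_ne_self_of_ne_fixedPt hφ hz (ne_of_mem_of_not_mem hw hzx)
  have hchain : ∀ c ⊆ stepBall d φ '' stepBall d φ x, IsChain (· ⊆ ·) c → c.Nonempty →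
      ∃ lb ∈ stepBall d φ '' stepBall d φ x, ∀ B ∈ c, lb ⊆ B := by
    rintro c hcS hc ⟨B₀, hB₀⟩
    obtain ⟨t, ht⟩ := hpc c (fun B hB => by
      obtain ⟨w, hw, rfl⟩ := hcS hB
      exact ⟨w, φ w, (hmoves w hw).symm, rfl⟩) hc
    obtain ⟨w₀, hw₀, rfl⟩ := hcS hB₀
    refine ⟨stepBall d φ t, ⟨t, hnest hw₀ (ht _ hB₀), rfl⟩, fun B hB => ?_⟩
    obtain ⟨w, -, rfl⟩ := hcS hB
    exact hnest (ht _ hB)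
  obtain ⟨m, -, hmin⟩ := zorn_superset_nonempty _ hchain (stepBall d φ x)
    ⟨x, self_mem_stepBall hd1 x, rfl⟩
  obtain ⟨w, hw, rfl⟩ := hmin.prop
  have hφw : φ w ∈ stepBall d φ x := hnest hw (apply_mem_stepBall w)
  have hle : stepBall d φ w ⊆ stepBall d φ (φ w) :=
    hmin.2 ⟨φ w, hφw, rfl⟩ (hnest (apply_mem_stepBall w))
  have hw_mem : d (φ w) w ≤ d (φ w) (φ (φ w)) := hle (self_mem_stepBall hd1 w)
  have hcontract : d (φ w) (φ (φ w)) < d w (φ w) := hφ w (φ w) (hmoves w hw).symm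
  exact (hd2 (φ w) w ▸ hw_mem).not_gt hcontract

end Ball

section Orbit

variable {X Γ : Type*} [PartialOrder Γ] {d : X → X → Γ} {φ : X → X} {y z : X}

lemma iterate_ne_fixedPt_of_le (hz : φ z = z) {k j : ℕ} (hkj : k ≤ j) (hj : φ^[j] y ≠ z) :
    φ^[k] y ≠ z := by
  intro hk
  apply hj
  rw [← Nat.sub_add_cancel hkj, Function.iterate_add_apply, hk, Function.iterate_fixed hz]

lemma dist_iterate_apply_strictAntiOn (hφ : ∀ x x' : X, x ≠ x' → d (φ x) (φ x') < d x x')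
    (hz : φ z = z) {j : ℕ} (hj : φ^[j] y ≠ z) :
    StrictAntiOn (fun m => d (φ^[m] y) (φ (φ^[m] y))) (Set.Iic j) := by
  refine strictAntiOn_Iic_of_succ_lt fun m hm => ?_
  rw [Order.succ_eq_add_one, ← Nat.succ_eq_add_one, Function.iterate_succ_apply']
  exact hφ _ _ (apply_ne_self_of_ne_fixedPt hφ hz (iterate_ne_fixedPt_of_le hz hm.le hj)).symm

/-- For `ι < ω`, `ι.card.toNat` is `ι` read as a natural number. -/
noncomputable def orbitThen (φ : X → X) (y z : X) (ι : Ordinal) : X :=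
  if ι < Ordinal.omega0 then φ^[ι.card.toNat] y else z

@[simp]
lemma orbitThen_natCast (n : ℕ) : orbitThen φ y z n = φ^[n] y := by
  simp [orbitThen, Ordinal.natCast_lt_omega0]

lemma orbitThen_natCast_add_one (n : ℕ) : orbitThen φ y z (n + 1) = φ (φ^[n] y) := by
  rw [← Nat.cast_add_one, orbitThen_natCast, Function.iterate_succ_apply']

lemma orbitThen_zero : orbitThen φ y z 0 = y := by
  simpa using orbitThen_natCast (φ := φ) (y := y) (z := z) 0

lemma orbitThen_omega0 : orbitThen φ y z Ordinal.omega0 = z := by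
  simp [orbitThen]

theorem memP_orbitThen [OrderBot Γ] (hd2 : ∀ x y : X, d x y = d y x)
    (hφ : ∀ x x' : X, x ≠ x' → d (φ x) (φ x') < d x x') (hz : φ z = z)
    (hz_mem : ∀ x, z ∈ stepBall d φ x) {ν : Ordinal} (hν : ν ≤ Ordinal.omega0)
    (hne : ∀ m : ℕ, (m : Ordinal) < ν → φ^[m] y ≠ z) :
    MemP d φ (ν + 1) (orbitThen φ y z) := by
  have hnat : ∀ ι < ν, ∃ m : ℕ, ι = m := fun ι hι => Ordinal.lt_omega0.mp (hι.trans_le hν)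
  have hsucc : ∀ ι, ι + 1 < ν + 1 → ι < ν := fun ι h =>
    Order.add_one_le_iff.mp (Order.lt_add_one_iff.mp h)
  refine ⟨fun ι hι => ?_, fun ι κ hικ hκ => ?_, fun μ hμ hμν ι hιμ => ?_⟩
  · obtain ⟨m, rfl⟩ := hnat ι (hsucc ι hι)
    rw [orbitThen_natCast_add_one, orbitThen_natCast]
    exact ⟨rfl, apply_ne_self_of_ne_fixedPt hφ hz (hne m (hsucc _ hι))⟩
  · obtain ⟨j, rfl⟩ := hnat κ (hsucc κ hκ)
    obtain ⟨i, rfl⟩ := Ordinal.lt_omega0.mp (hικ.trans (Ordinal.natCast_lt_omega0 j))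
    rw [Nat.cast_lt] at hικ
    simp only [orbitThen_natCast_add_one, orbitThen_natCast]
    exact dist_iterate_apply_strictAntiOn hφ hz (hne j (hsucc _ hκ)) (Set.mem_Iic.2 hικ.le)
      (Set.mem_Iic.2 le_rfl) hικ
  · obtain rfl : μ = Ordinal.omega0 :=
      le_antisymm ((Order.lt_add_one_iff.mp hμν).trans hν) (Ordinal.omega0_le_of_isSuccLimit hμ)
    obtain ⟨m, rfl⟩ := Ordinal.lt_omega0.mp hιμ
    rw [orbitThen_omega0, orbitThen_natCast_add_one, orbitThen_natCast, hd2]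
    exact hz_mem _

lemma exists_first_orbitThen_eq :
    ∃ ν ≤ Ordinal.omega0, (∀ m : ℕ, (m : Ordinal) < ν → φ^[m] y ≠ z) ∧ orbitThen φ y z ν = z := by
  classical
  by_cases h : ∃ n, φ^[n] y = z
  · refine ⟨Nat.find h, (Ordinal.natCast_lt_omega0 _).le,
      fun m hm => Nat.find_min h (by exact_mod_cast hm), ?_⟩
    rw [orbitThen_natCast]
    exact Nat.find_spec h
  · exact ⟨Ordinal.omega0, le_rfl, fun m _ hm => h ⟨m, hm⟩, orbitThen_omega0⟩

end Orbit

theorem stmt_13_general {X Γ : Type*} [PartialOrder Γ] [OrderBot Γ]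
    (d : X → X → Γ)
    (hd1 : ∀ x y : X, d x y = ⊥ ↔ x = y)
    (hd2 : ∀ x y : X, d x y = d y x)
    (hd3 : ∀ (γ : Γ) (x y z : X), d x y ≤ γ → d y z ≤ γ → d x z ≤ γ)
    (hpc : ∀ C : Set (Set X),
      (∀ B ∈ C, ∃ x y : X, x ≠ y ∧ B = {w : X | d x w ≤ d x y}) →
      IsChain (· ⊆ ·) C → (⋂₀ C).Nonempty)
    (φ : X → X)
    (hφ : ∀ x x' : X, x ≠ x' → d (φ x) (φ x') < d x x')
    (z : X) (hz : φ z = z)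
    (y : X) :
    (∃ (lam : Ordinal) (a : Ordinal → X), MemP d φ lam a ∧ a 0 = y ∧
      ∃ ι < lam, a ι = z) ∨
    (∃ (lam : Ordinal) (a : Ordinal → X), MemP d φ lam a ∧ a 0 = y ∧
      Order.IsSuccLimit lam ∧
      (⋂ ι ∈ Set.Iio lam, {w : X | d (a ι) w ≤ d (a ι) (φ (a ι))}) = {z}) := by
  obtain ⟨ν, hν, hne, hreach⟩ := exists_first_orbitThen_eq (φ := φ) (y := y) (z := z)
  have hz_mem : ∀ x, z ∈ stepBall d φ x := fixedPt_mem_stepBall hd1 hd2 hd3 hpc hφ hz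
  exact Or.inl ⟨ν + 1, orbitThen φ y z, memP_orbitThen hd2 hφ hz hz_mem hν hne, orbitThen_zero,
    ν, Order.lt_add_one_iff.2 le_rfl, hreach⟩

/-- Corollary to the Approximation Theorem: starting from any y ≠ z, either some
family in 𝒫 beginning at y reaches the fixed point z, or some family in 𝒫
beginning at y is an asymptotic approximation to z. -/
theorem stmt_13 {X Γ : Type*} [PartialOrder Γ] [OrderBot Γ]
    (d : X → X → Γ)
    (hd1 : ∀ x y : X, d x y = ⊥ ↔ x = y)
    (hd2 : ∀ x y : X, d x y = d y x)
    (hd3 : ∀ (γ : Γ) (x y z : X), d x y ≤ γ → d y z ≤ γ → d x z ≤ γ)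
    (hns : ∀ γ : Γ, γ ≠ ⊥ → ∃ γ' : Γ, γ' ≠ ⊥ ∧ γ' < γ)
    (htwo : ∃ x y : X, x ≠ y)
    (hpc : ∀ C : Set (Set X),
      (∀ B ∈ C, ∃ x y : X, x ≠ y ∧ B = {w : X | d x w ≤ d x y}) →
      IsChain (· ⊆ ·) C → (⋂₀ C).Nonempty)
    (φ : X → X)
    (hφ : ∀ x x' : X, x ≠ x' → d (φ x) (φ x') < d x x')
    (z : X) (hz : φ z = z)
    (y : X) (hy : y ≠ z) :
    (∃ (lam : Ordinal) (a : Ordinal → X), MemP d φ lam a ∧ a 0 = y ∧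
      ∃ ι < lam, a ι = z) ∨
    (∃ (lam : Ordinal) (a : Ordinal → X), MemP d φ lam a ∧ a 0 = y ∧
      Order.IsSuccLimit lam ∧
      (⋂ ι ∈ Set.Iio lam, {w : X | d (a ι) w ≤ d (a ι) (φ (a ι))}) = {z}) :=
  stmt_13_general d hd1 hd2 hd3 hpc φ hφ z hz y
end

section
/- Let X be principally complete, φ strictly contracting with fixed point z, λ a limit ordinal, and α = (a_ι)_{ι<λ} ∈ P. If t ∈ ∩_{ι<λ} B_ι(α) then d(t, φ(t)) ≤ d(a_ι, a_{ι+1}) for every ι < λ, and the extended family α' = (a'_ι)_{ι<λ+1} with a'_ι = a_ι for ι < λ and a'_λ = t belongs to P (provided t ≠ φ(t) in case one extends further). -/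
/-! In an ultrametric space, a point `t` of the ball of radius `d x (φ x)` around `x` is moved
by `φ` by at most that radius: `d t (φ x)` and `d (φ x) (φ t) < d x t` are both bounded by it.
Below a limit length, `a (ι + 1) = φ (a ι)` for every `ι < λ`, so the balls `B_ι(α)` have radius
`d (a ι) (a (ι + 1))`, and `t` lying in all of them is exactly the limit condition at `λ` needed
to append `t` to the family. -/

open Order

theorem dist_map_le_of_dist_le_dist_map {X Γ : Type*} [PartialOrder Γ] {d : X → X → Γ}
    {φ : X → X} (hd_symm : ∀ x y, d x y = d y x)
    (hd_ultra : ∀ (γ : Γ) (x y z : X), d x y ≤ γ → d y z ≤ γ → d x z ≤ γ)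
    (hφ : ∀ x x', x ≠ x' → d (φ x) (φ x') < d x x') {x t : X} (ht : d x t ≤ d x (φ x)) :
    d t (φ t) ≤ d x (φ x) := by
  obtain rfl | hne := eq_or_ne x t
  · exact le_rfl
  have h_t_φx : d t (φ x) ≤ d x (φ x) := hd_ultra _ t x _ (hd_symm t x ▸ ht) le_rfl
  have h_φx_φt : d (φ x) (φ t) ≤ d x (φ x) := ((hφ x t hne).trans_le ht).le
  exact hd_ultra _ _ _ _ h_t_φx h_φx_φt

namespace MemP

variable {X Γ : Type*} [PartialOrder Γ] [OrderBot Γ] {d : X → X → Γ} {φ : X → X}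
  {lam : Ordinal} {a : Ordinal → X}

theorem succ_eq (hP : MemP d φ lam a) {ι : Ordinal} (hι : ι + 1 < lam) :
    a (ι + 1) = φ (a ι) :=
  (hP.1 ι hι).1

theorem extend (hP : MemP d φ lam a) (hlam : IsSuccLimit lam) {t : X}
    (ht : ∀ ι < lam, d t (a ι) ≤ d (a ι) (a (ι + 1))) :
    MemP d φ (lam + 1) (fun ι => if ι < lam then a ι else t) := by
  have hsucc_lt : ∀ {ι}, ι + 1 < lam + 1 ↔ ι < lam := by
    intro ι; rw [lt_add_one_iff, add_one_le_iff]
  refine ⟨fun ι hι => ?_, fun ι κ hικ hκ => ?_, fun μ hμ hμlam ι hιμ => ?_⟩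
  · have hι := hsucc_lt.1 hι
    simpa only [if_pos hι, if_pos (hlam.add_one_lt hι)] using hP.1 ι (hlam.add_one_lt hι)
  · have hκ := hsucc_lt.1 hκ
    have hι := hικ.trans hκ
    simpa only [if_pos hι, if_pos hκ, if_pos (hlam.add_one_lt hι), if_pos (hlam.add_one_lt hκ)]
      using hP.2.1 ι κ hικ (hlam.add_one_lt hκ)
  · have hι := hιμ.trans_le (lt_add_one_iff.1 hμlam)
    simp only [if_pos hι, if_pos (hlam.add_one_lt hι)]
    obtain hμ' | rfl := (lt_add_one_iff.1 hμlam).lt_or_eq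
    · simpa only [if_pos hμ'] using hP.2.2 μ hμ hμ' ι hιμ
    · simpa only [lt_irrefl, if_false] using ht ι hι

end MemP

theorem stmt_14_general {X Γ : Type*} [PartialOrder Γ] [OrderBot Γ]
    (d : X → X → Γ)
    (hd2 : ∀ x y : X, d x y = d y x)
    (hd3 : ∀ (γ : Γ) (x y z : X), d x y ≤ γ → d y z ≤ γ → d x z ≤ γ)
    (φ : X → X)
    (hφ : ∀ x x' : X, x ≠ x' → d (φ x) (φ x') < d x x')
    (lam : Ordinal) (hlam : Order.IsSuccLimit lam) (a : Ordinal → X)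
    (hP : MemP d φ lam a)
    (t : X) (ht : ∀ ι : Ordinal, ι < lam → d (a ι) t ≤ d (a ι) (φ (a ι))) :
    (∀ ι : Ordinal, ι < lam → d t (φ t) ≤ d (a ι) (a (ι + 1))) ∧
    MemP d φ (lam + 1) (fun ι => if ι < lam then a ι else t) := by
  have hstep : ∀ ι < lam, a (ι + 1) = φ (a ι) := fun ι hι => hP.succ_eq (hlam.add_one_lt hι)
  refine ⟨fun ι hι => ?_, hP.extend hlam fun ι hι => ?_⟩
  · rw [hstep ι hι]
    exact dist_map_le_of_dist_le_dist_map hd2 hd3 hφ (ht ι hι)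
  · rw [hd2, hstep ι hι]
    exact ht ι hι

/-- If t lies in the intersection of the balls B_ι(α) of a family α ∈ 𝒫 of limit
length λ, then d(t, φ(t)) ≤ d(a_ι, a_{ι+1}) for every ι < λ, and the extended
family α' of length λ+1 obtained by appending t belongs to 𝒫. -/
theorem stmt_14 {X Γ : Type*} [PartialOrder Γ] [OrderBot Γ]
    (d : X → X → Γ)
    (hd1 : ∀ x y : X, d x y = ⊥ ↔ x = y)
    (hd2 : ∀ x y : X, d x y = d y x)
    (hd3 : ∀ (γ : Γ) (x y z : X), d x y ≤ γ → d y z ≤ γ → d x z ≤ γ)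
    (φ : X → X)
    (hφ : ∀ x x' : X, x ≠ x' → d (φ x) (φ x') < d x x')
    (lam : Ordinal) (hlam : Order.IsSuccLimit lam) (a : Ordinal → X)
    (hP : MemP d φ lam a)
    (t : X) (ht : ∀ ι : Ordinal, ι < lam → d (a ι) t ≤ d (a ι) (φ (a ι))) :
    (∀ ι : Ordinal, ι < lam → d t (φ t) ≤ d (a ι) (a (ι + 1))) ∧
    MemP d φ (lam + 1) (fun ι => if ι < lam then a ι else t) :=
  stmt_14_general d hd2 hd3 φ hφ lam hlam a hP t ht
end

section
/- Let Γ be totally ordered, X principally complete, φ strictly contracting with fixed point z, and α = (a_ι)_{ι<λ} an asymptotic approximation to z. Then α is a pseudo-convergent family: for all ι < μ < ν < λ, d(a_ι, a_μ) = d(a_ι, a_{ι+1}) > d(a_μ, a_{μ+1}) = d(a_μ, a_ν). -/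
/-! The radii `d (a ι) (a (ι + 1))` strictly decrease, and in an ultrametric space every
triangle is isosceles. By transfinite induction on `κ`, the point
`a κ` stays at distance `d (a ι) (a (ι + 1))` from `a ι` for all `ι < κ`: at a successor step
one moves by a strictly smaller radius, and at a limit `κ` the point `a κ` is closer to
`a (ι + 1)` than `a (ι + 1)` is to `a ι`. -/

section Ultrametric

variable {X Γ : Type*} [LinearOrder Γ] {d : X → X → Γ}

theorem ultrametric_dist_eq_of_lt (hd2 : ∀ x y : X, d x y = d y x)
    (hd3 : ∀ x y z : X, d x z ≤ max (d x y) (d y z)) {x y z : X} (h : d y z < d x y) :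
    d x z = d x y := by
  refine le_antisymm ((hd3 x y z).trans (max_le le_rfl h.le)) ?_
  have hxy := hd3 x z y
  rw [hd2 z y] at hxy
  exact (le_max_iff.mp hxy).resolve_right h.not_ge

theorem dist_eq_dist_add_one_of_lt (hd2 : ∀ x y : X, d x y = d y x)
    (hd3 : ∀ x y z : X, d x z ≤ max (d x y) (d y z)) {lam : Ordinal} {a : Ordinal → X}
    (hdec : ∀ ι κ : Ordinal, ι < κ → κ + 1 < lam →
      d (a κ) (a (κ + 1)) < d (a ι) (a (ι + 1)))
    (hlim : ∀ μ : Ordinal, Order.IsSuccLimit μ → μ < lam →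
      ∀ ι : Ordinal, ι < μ → d (a μ) (a ι) ≤ d (a ι) (a (ι + 1)))
    {κ : Ordinal} (hκ : κ < lam) {ι : Ordinal} (hι : ι < κ) :
    d (a ι) (a κ) = d (a ι) (a (ι + 1)) := by
  induction κ using Ordinal.limitRecOn generalizing ι with
  | zero => exact absurd hι zero_le.not_gt
  | add_one σ ih =>
    rcases (Order.lt_add_one_iff.mp hι).lt_or_eq with hισ | rfl
    · have hσ := ih ((lt_add_one σ).trans hκ) hισ
      rw [ultrametric_dist_eq_of_lt hd2 hd3 (hσ ▸ hdec ι σ hισ hκ), hσ]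
    · rfl
  | limit κ hκlim =>
    have hι1 : ι + 1 < κ := hκlim.add_one_lt hι
    have hclose : d (a (ι + 1)) (a κ) < d (a ι) (a (ι + 1)) := by
      rw [hd2]
      exact (hlim κ hκlim hκ (ι + 1) hι1).trans_lt
        (hdec ι (ι + 1) (lt_add_one ι) ((hκlim.add_one_lt hι1).trans hκ))
    exact ultrametric_dist_eq_of_lt hd2 hd3 hclose

end Ultrametric

theorem stmt_15_general {X Γ : Type*} [LinearOrder Γ]
    (d : X → X → Γ)
    (hd2 : ∀ x y : X, d x y = d y x)
    (hd3 : ∀ x y z : X, d x z ≤ max (d x y) (d y z))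
    (z : X)
    (lam : Ordinal) (hlam : Order.IsSuccLimit lam) (a : Ordinal → X)
    (hdec : ∀ ι κ : Ordinal, ι < κ → κ + 1 < lam →
      d (a κ) (a (κ + 1)) < d (a ι) (a (ι + 1)))
    (hlim : ∀ μ : Ordinal, Order.IsSuccLimit μ → μ < lam →
      ∀ ι : Ordinal, ι < μ → d (a μ) (a ι) ≤ d (a ι) (a (ι + 1))) :
    ∀ ι μ ν : Ordinal, ι < μ → μ < ν → ν < lam →
      d (a ι) (a μ) = d (a ι) (a (ι + 1)) ∧
      d (a μ) (a ν) = d (a μ) (a (μ + 1)) ∧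
      d (a μ) (a (μ + 1)) < d (a ι) (a (ι + 1)) := by
  intro ι μ ν hιμ hμν hν
  have hμ : μ < lam := hμν.trans hν
  exact ⟨dist_eq_dist_add_one_of_lt hd2 hd3 hdec hlim hμ hιμ,
    dist_eq_dist_add_one_of_lt hd2 hd3 hdec hlim hν hμν,
    hdec ι μ hιμ (hlam.add_one_lt hμ)⟩

/-- An asymptotic approximation to the fixed point z is a pseudo-convergent
family: for all ι < μ < ν < λ,
d(a_ι, a_μ) = d(a_ι, a_{ι+1}) > d(a_μ, a_{μ+1}) = d(a_μ, a_ν). -/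
theorem stmt_15 {X Γ : Type*} [LinearOrder Γ] [OrderBot Γ]
    (d : X → X → Γ)
    (hd1 : ∀ x y : X, d x y = ⊥ ↔ x = y)
    (hd2 : ∀ x y : X, d x y = d y x)
    (hd3 : ∀ x y z : X, d x z ≤ max (d x y) (d y z))
    (hns : ∀ γ : Γ, γ ≠ ⊥ → ∃ γ' : Γ, γ' ≠ ⊥ ∧ γ' < γ)
    (hpc : ∀ C : Set (Set X),
      (∀ B ∈ C, ∃ x y : X, x ≠ y ∧ B = {w : X | d x w ≤ d x y}) →
      IsChain (· ⊆ ·) C → (⋂₀ C).Nonempty)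
    (φ : X → X)
    (hφ : ∀ x x' : X, x ≠ x' → d (φ x) (φ x') < d x x')
    (z : X) (hz : φ z = z)
    (lam : Ordinal) (hlam : Order.IsSuccLimit lam) (a : Ordinal → X)
    (hsucc : ∀ ι : Ordinal, ι + 1 < lam → a (ι + 1) = φ (a ι) ∧ φ (a ι) ≠ a ι)
    (hdec : ∀ ι κ : Ordinal, ι < κ → κ + 1 < lam →
      d (a κ) (a (κ + 1)) < d (a ι) (a (ι + 1)))
    (hlim : ∀ μ : Ordinal, Order.IsSuccLimit μ → μ < lam →
      ∀ ι : Ordinal, ι < μ → d (a μ) (a ι) ≤ d (a ι) (a (ι + 1)))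
    (happrox : (⋂ ι ∈ Set.Iio lam, {w : X | d (a ι) w ≤ d (a ι) (φ (a ι))}) = {z}) :
    ∀ ι μ ν : Ordinal, ι < μ → μ < ν → ν < lam →
      d (a ι) (a μ) = d (a ι) (a (ι + 1)) ∧
      d (a μ) (a ν) = d (a μ) (a (μ + 1)) ∧
      d (a μ) (a (μ + 1)) < d (a ι) (a (ι + 1)) :=
  stmt_15_general d hd2 hd3 z lam hlam a hdec hlim
end

section
/- Let Γ be totally ordered, X principally complete, φ strictly contracting with fixed point z, and α = (a_ι)_{ι<λ} an asymptotic approximation to z. Then z is a pseudo-limit of α, and z is the only pseudo-limit of α. -/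
/-!
For `ι < κ < λ` the ultrametric inequality, pushed through successor and limit stages, gives
`d(a_ι, a_κ) ≤ d(a_ι, a_{ι+1})`. Together with the strict decrease of the successive distances
this shows that the pseudo-limits of `α` are exactly the points of `⋂_ι B_{d(a_ι, a_{ι+1})}(a_ι)`.
As `a_{ι+1} = φ(a_ι)`, this intersection is `{z}` by assumption.
-/

section PseudoConvergent

variable {X Γ : Type*} [LinearOrder Γ] (d : X → X → Γ)

def IsPseudoLimit (a : Ordinal → X) (lam : Ordinal) (y : X) : Prop :=
  ∃ ι₁ < lam, ∀ ι : Ordinal, ι₁ ≤ ι → ι < lam → d y (a ι) ≤ d (a ι) (a (ι + 1))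

variable {d} {lam : Ordinal} {a : Ordinal → X}

theorem dist_le_dist_succ_of_lt (hsymm : ∀ x y : X, d x y = d y x)
    (hultra : ∀ x y z : X, d x z ≤ max (d x y) (d y z))
    (hdec : ∀ ι κ : Ordinal, ι < κ → κ + 1 < lam →
      d (a κ) (a (κ + 1)) < d (a ι) (a (ι + 1)))
    (hlim : ∀ μ : Ordinal, Order.IsSuccLimit μ → μ < lam →
      ∀ ι : Ordinal, ι < μ → d (a μ) (a ι) ≤ d (a ι) (a (ι + 1)))
    {κ : Ordinal} (hκ : κ < lam) {ι : Ordinal} (hι : ι < κ) :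
    d (a ι) (a κ) ≤ d (a ι) (a (ι + 1)) := by
  induction κ using Ordinal.limitRecOn with
  | zero => exact absurd hι (not_lt_bot (a := ι))
  | add_one ν ih =>
    rcases (Order.lt_add_one_iff.mp hι).eq_or_lt with rfl | hιν
    · exact le_rfl
    · calc d (a ι) (a (ν + 1)) ≤ max (d (a ι) (a ν)) (d (a ν) (a (ν + 1))) := hultra _ _ _
        _ ≤ d (a ι) (a (ι + 1)) :=
          max_le (ih ((Order.lt_add_one_iff.mpr le_rfl).trans hκ) hιν) (hdec ι ν hιν hκ).le
  | limit μ hμ _ => exact hsymm (a μ) (a ι) ▸ hlim μ hμ hκ ι hι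

theorem isPseudoLimit_iff (hsymm : ∀ x y : X, d x y = d y x)
    (hultra : ∀ x y z : X, d x z ≤ max (d x y) (d y z)) (hlam : Order.IsSuccLimit lam)
    (hdec : ∀ ι κ : Ordinal, ι < κ → κ + 1 < lam →
      d (a κ) (a (κ + 1)) < d (a ι) (a (ι + 1)))
    (hlim : ∀ μ : Ordinal, Order.IsSuccLimit μ → μ < lam →
      ∀ ι : Ordinal, ι < μ → d (a μ) (a ι) ≤ d (a ι) (a (ι + 1)))
    {y : X} :
    IsPseudoLimit d a lam y ↔ ∀ ι < lam, d (a ι) y ≤ d (a ι) (a (ι + 1)) := by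
  constructor
  · rintro ⟨ι₁, hι₁, hy⟩ ι hι
    rcases le_or_gt ι₁ ι with hle | hlt
    · exact hsymm (a ι) y ▸ hy ι hle hι
    · calc d (a ι) y ≤ max (d (a ι) (a ι₁)) (d (a ι₁) y) := hultra _ _ _
        _ ≤ d (a ι) (a (ι + 1)) := by
          refine max_le (dist_le_dist_succ_of_lt hsymm hultra hdec hlim hι₁ hlt) ?_
          calc d (a ι₁) y = d y (a ι₁) := hsymm _ _
            _ ≤ d (a ι₁) (a (ι₁ + 1)) := hy ι₁ le_rfl hι₁
            _ ≤ d (a ι) (a (ι + 1)) := (hdec ι ι₁ hlt (hlam.succ_lt hι₁)).le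
  · exact fun h => ⟨0, hlam.bot_lt, fun ι _ hι => hsymm y (a ι) ▸ h ι hι⟩

end PseudoConvergent

theorem stmt_16_general {X Γ : Type*} [LinearOrder Γ]
    (d : X → X → Γ)
    (hd2 : ∀ x y : X, d x y = d y x)
    (hd3 : ∀ x y z : X, d x z ≤ max (d x y) (d y z))
    (φ : X → X)
    (z : X)
    (lam : Ordinal) (hlam : Order.IsSuccLimit lam) (a : Ordinal → X)
    (hsucc : ∀ ι : Ordinal, ι + 1 < lam → a (ι + 1) = φ (a ι) ∧ φ (a ι) ≠ a ι)
    (hdec : ∀ ι κ : Ordinal, ι < κ → κ + 1 < lam →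
      d (a κ) (a (κ + 1)) < d (a ι) (a (ι + 1)))
    (hlim : ∀ μ : Ordinal, Order.IsSuccLimit μ → μ < lam →
      ∀ ι : Ordinal, ι < μ → d (a μ) (a ι) ≤ d (a ι) (a (ι + 1)))
    (happrox : (⋂ ι ∈ Set.Iio lam, {w : X | d (a ι) w ≤ d (a ι) (φ (a ι))}) = {z}) :
    (∃ ι₁ < lam, ∀ ι : Ordinal, ι₁ ≤ ι → ι < lam →
      d z (a ι) ≤ d (a ι) (a (ι + 1))) ∧
    (∀ t : X, (∃ ι₁ < lam, ∀ ι : Ordinal, ι₁ ≤ ι → ι < lam →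
      d t (a ι) ≤ d (a ι) (a (ι + 1))) → t = z) := by
  have hpseudo : ∀ y, IsPseudoLimit d a lam y ↔ y = z := by
    intro y
    rw [isPseudoLimit_iff hd2 hd3 hlam hdec hlim, ← Set.mem_singleton_iff, ← happrox]
    simp only [Set.mem_iInter₂, Set.mem_Iio, Set.mem_ofPred_eq]
    exact forall₂_congr fun ι hι => by rw [(hsucc ι (hlam.succ_lt hι)).1]
  exact ⟨(hpseudo z).2 rfl, fun t ht => (hpseudo t).1 ht⟩

/-- The fixed point z is a pseudo-limit of any asymptotic approximation α to z,
and it is the only pseudo-limit of α. -/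
theorem stmt_16 {X Γ : Type*} [LinearOrder Γ] [OrderBot Γ]
    (d : X → X → Γ)
    (hd1 : ∀ x y : X, d x y = ⊥ ↔ x = y)
    (hd2 : ∀ x y : X, d x y = d y x)
    (hd3 : ∀ x y z : X, d x z ≤ max (d x y) (d y z))
    (hns : ∀ γ : Γ, γ ≠ ⊥ → ∃ γ' : Γ, γ' ≠ ⊥ ∧ γ' < γ)
    (hpc : ∀ C : Set (Set X),
      (∀ B ∈ C, ∃ x y : X, x ≠ y ∧ B = {w : X | d x w ≤ d x y}) →
      IsChain (· ⊆ ·) C → (⋂₀ C).Nonempty)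
    (φ : X → X)
    (hφ : ∀ x x' : X, x ≠ x' → d (φ x) (φ x') < d x x')
    (z : X) (hz : φ z = z)
    (lam : Ordinal) (hlam : Order.IsSuccLimit lam) (a : Ordinal → X)
    (hsucc : ∀ ι : Ordinal, ι + 1 < lam → a (ι + 1) = φ (a ι) ∧ φ (a ι) ≠ a ι)
    (hdec : ∀ ι κ : Ordinal, ι < κ → κ + 1 < lam →
      d (a κ) (a (κ + 1)) < d (a ι) (a (ι + 1)))
    (hlim : ∀ μ : Ordinal, Order.IsSuccLimit μ → μ < lam →
      ∀ ι : Ordinal, ι < μ → d (a μ) (a ι) ≤ d (a ι) (a (ι + 1)))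
    (happrox : (⋂ ι ∈ Set.Iio lam, {w : X | d (a ι) w ≤ d (a ι) (φ (a ι))}) = {z}) :
    (∃ ι₁ < lam, ∀ ι : Ordinal, ι₁ ≤ ι → ι < lam →
      d z (a ι) ≤ d (a ι) (a (ι + 1))) ∧
    (∀ t : X, (∃ ι₁ < lam, ∀ ι : Ordinal, ι₁ ≤ ι → ι < lam →
      d t (a ι) ≤ d (a ι) (a (ι + 1))) → t = z) :=
  stmt_16_general d hd2 hd3 φ z lam hlam a hsucc hdec hlim happrox
end

section
/- Let Γ be totally ordered, X principally complete, φ strictly contracting with fixed point z, α ∈ P an asymptotic approximation to z, and α' ∈ P with α < α' (i.e., α' properly extends α). Then α' reaches z, that is, the element of α' at index λ (the length of α) equals z. -/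
open Order

/-- Since `μ` is a limit, `ι + 1 < μ`, so the radius `d (a ι) (φ (a ι))` is the step
`d (a ι) (a (ι + 1))` that bounds `d (a μ) (a ι)` in the definition of `𝒫`. -/
theorem MemP.dist_le_of_lt_isSuccLimit {X Γ : Type*} [PartialOrder Γ] [OrderBot Γ]
    {d : X → X → Γ} (hsymm : ∀ x y : X, d x y = d y x) {φ : X → X} {lam : Ordinal}
    {a : Ordinal → X} (ha : MemP d φ lam a) {μ : Ordinal} (hμ : IsSuccLimit μ)
    (hμlam : μ < lam) {ι : Ordinal} (hι : ι < μ) :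
    d (a ι) (a μ) ≤ d (a ι) (φ (a ι)) := by
  have hsucc : ι + 1 < lam := (hμ.add_one_lt hι).trans hμlam
  rw [hsymm, ← (ha.1 ι hsucc).1]
  exact ha.2.2 μ hμ hμlam ι hι

theorem stmt_17_general {X Γ : Type*} [LinearOrder Γ] [OrderBot Γ]
    (d : X → X → Γ)
    (hd2 : ∀ x y : X, d x y = d y x)
    (φ : X → X)
    (z : X)
    (lam : Ordinal) (a : Ordinal → X)
    (hlam : Order.IsSuccLimit lam)
    (happrox : (⋂ ι ∈ Set.Iio lam, {w : X | d (a ι) w ≤ d (a ι) (φ (a ι))}) = {z})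
    (lam' : Ordinal) (a' : Ordinal → X)
    (hP' : MemP d φ lam' a')
    (hext : lam < lam' ∧ ∀ ι : Ordinal, ι < lam → a' ι = a ι) :
    a' lam = z := by
  obtain ⟨hlt, hagree⟩ := hext
  suffices a' lam ∈ ⋂ ι ∈ Set.Iio lam, {w : X | d (a ι) w ≤ d (a ι) (φ (a ι))} by
    rwa [happrox] at this
  refine Set.mem_iInter₂.2 fun ι hι => ?_
  rw [← hagree ι hι]
  exact hP'.dist_le_of_lt_isSuccLimit hd2 hlam hlt hι

/-- If α ∈ 𝒫 is an asymptotic approximation to z and α' ∈ 𝒫 properly extends α,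
then α' reaches z: its element at index λ (the length of α) is z. -/
theorem stmt_17 {X Γ : Type*} [LinearOrder Γ] [OrderBot Γ]
    (d : X → X → Γ)
    (hd1 : ∀ x y : X, d x y = ⊥ ↔ x = y)
    (hd2 : ∀ x y : X, d x y = d y x)
    (hd3 : ∀ x y z : X, d x z ≤ max (d x y) (d y z))
    (hns : ∀ γ : Γ, γ ≠ ⊥ → ∃ γ' : Γ, γ' ≠ ⊥ ∧ γ' < γ)
    (hpc : ∀ C : Set (Set X),
      (∀ B ∈ C, ∃ x y : X, x ≠ y ∧ B = {w : X | d x w ≤ d x y}) →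
      IsChain (· ⊆ ·) C → (⋂₀ C).Nonempty)
    (φ : X → X)
    (hφ : ∀ x x' : X, x ≠ x' → d (φ x) (φ x') < d x x')
    (z : X) (hz : φ z = z)
    (lam : Ordinal) (a : Ordinal → X)
    (hP : MemP d φ lam a)
    (hlam : Order.IsSuccLimit lam)
    (happrox : (⋂ ι ∈ Set.Iio lam, {w : X | d (a ι) w ≤ d (a ι) (φ (a ι))}) = {z})
    (lam' : Ordinal) (a' : Ordinal → X)
    (hP' : MemP d φ lam' a')
    (hext : lam < lam' ∧ ∀ ι : Ordinal, ι < lam → a' ι = a ι) :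
    a' lam = z :=
  stmt_17_general d hd2 φ z lam a hlam happrox lam' a' hP' hext
end

section
/- Let Γ be totally ordered with no smallest positive element, X a solid principally complete ultrametric space, φ strictly contracting with fixed point z, and α an asymptotic approximation to z. Then Λ_φ = {d(x,φ(x)) : x ≠ z} equals Γ\{0}, α is a Cauchy family, and z = lim α. -/
/-! The fixed point `z` is the only point common to all balls `B_{d(a_ι, φ a_ι)}(a_ι)`. By the
isosceles property of the ultrametric, `d(y, φ y) = d(y, z)` whenever `y ≠ z`, so solidity
makes every positive value a displacement. It also yields, for any `γ > 0`, a point at distance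
`γ` from `z`; since that point is not `z`, it leaves some ball of the approximation, which forces
a radius `d(a_ι, φ a_ι)` below `γ`. The radii decrease along the approximation and bound
`d(a_ι, z)`, so `a_ι → z`, and a convergent family is Cauchy in an ultrametric space. -/

structure IsUltrametric {X Γ : Type*} [LinearOrder Γ] [OrderBot Γ] (d : X → X → Γ) : Prop where
  eq_bot_iff : ∀ x y : X, d x y = ⊥ ↔ x = y
  symm : ∀ x y : X, d x y = d y x
  le_max : ∀ x y z : X, d x z ≤ max (d x y) (d y z)

def TendstoBelow {X Γ I : Type*} [LinearOrder Γ] [OrderBot Γ] [Preorder I]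
    (d : X → X → Γ) (a : I → X) (lam : I) (z : X) : Prop :=
  ∀ γ : Γ, γ ≠ ⊥ → ∃ ι₁ < lam, ∀ ι : I, ι₁ ≤ ι → ι < lam → d z (a ι) < γ

def IsCauchyBelow {X Γ I : Type*} [LinearOrder Γ] [OrderBot Γ] [Preorder I]
    (d : X → X → Γ) (a : I → X) (lam : I) : Prop :=
  ∀ γ : Γ, γ ≠ ⊥ → ∃ ι₀ < lam, ∀ ι κ : I, ι₀ ≤ ι → ι < κ → κ < lam → d (a ι) (a κ) < γ

theorem dist_map_le_of_le {X Γ : Type*} [LinearOrder Γ] {d : X → X → Γ} {φ : X → X}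
    {lam : Ordinal} (hlam : Order.IsSuccLimit lam) {a : Ordinal → X}
    (hstep : ∀ ι : Ordinal, ι + 1 < lam → a (ι + 1) = φ (a ι))
    (hdec : ∀ ι κ : Ordinal, ι < κ → κ + 1 < lam →
      d (a κ) (a (κ + 1)) < d (a ι) (a (ι + 1)))
    {ι κ : Ordinal} (hικ : ι ≤ κ) (hκ : κ < lam) :
    d (a κ) (φ (a κ)) ≤ d (a ι) (φ (a ι)) := by
  have hκ1 : κ + 1 < lam := hlam.succ_lt hκ
  have hι1 : ι + 1 < lam := hlam.succ_lt (hικ.trans_lt hκ)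
  rw [← hstep κ hκ1, ← hstep ι hι1]
  rcases hικ.eq_or_lt with rfl | hlt
  · exact le_rfl
  · exact (hdec ι κ hlt hκ1).le

theorem dist_fixedPoint_le_of_approx {X Γ : Type*} [LinearOrder Γ] {d : X → X → Γ}
    {φ : X → X} {z : X} {lam : Ordinal} {a : Ordinal → X}
    (happrox : (⋂ ι ∈ Set.Iio lam, {w : X | d (a ι) w ≤ d (a ι) (φ (a ι))}) = {z})
    {ι : Ordinal} (hι : ι < lam) : d (a ι) z ≤ d (a ι) (φ (a ι)) := by
  have hz_mem : z ∈ ⋂ ι ∈ Set.Iio lam, {w : X | d (a ι) w ≤ d (a ι) (φ (a ι))} :=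
    happrox ▸ rfl
  exact Set.mem_iInter₂.1 hz_mem ι hι

namespace IsUltrametric

variable {X Γ : Type*} [LinearOrder Γ] [OrderBot Γ] {d : X → X → Γ}

theorem dist_self (hd : IsUltrametric d) (x : X) : d x x = ⊥ :=
  (hd.eq_bot_iff x x).2 rfl

theorem dist_eq_of_dist_lt (hd : IsUltrametric d) {x y z : X} (h : d y z < d x y) :
    d x z = d x y := by
  refine le_antisymm ((hd.le_max x y z).trans (max_le le_rfl h.le)) (not_lt.1 fun hxz => ?_)
  have := hd.le_max x z y
  rw [hd.symm z y] at this
  exact (this.trans_lt (max_lt hxz h)).false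

theorem dist_map_eq_dist_fixedPoint (hd : IsUltrametric d) {φ : X → X}
    (hφ : ∀ x x' : X, x ≠ x' → d (φ x) (φ x') < d x x') {z : X} (hz : φ z = z)
    {y : X} (hy : y ≠ z) : d y (φ y) = d y z := by
  have hcontr := hφ y z hy
  rw [hz, hd.symm (φ y)] at hcontr
  exact hd.dist_eq_of_dist_lt hcontr

theorem displacements_eq (hd : IsUltrametric d) (hsolid : ∀ (γ : Γ) (x : X), ∃ y : X, d x y = γ)
    {φ : X → X} (hφ : ∀ x x' : X, x ≠ x' → d (φ x) (φ x') < d x x') {z : X} (hz : φ z = z) :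
    {γ : Γ | ∃ x : X, x ≠ z ∧ d x (φ x) = γ} = {γ : Γ | γ ≠ ⊥} := by
  ext γ
  constructor
  · rintro ⟨x, hxz, rfl⟩
    rw [hd.dist_map_eq_dist_fixedPoint hφ hz hxz]
    exact fun h => hxz ((hd.eq_bot_iff x z).1 h)
  · intro hγ
    obtain ⟨y, rfl⟩ := hsolid γ z
    have hyz : y ≠ z := fun h => hγ (h ▸ hd.dist_self y)
    exact ⟨y, hyz, by rw [hd.dist_map_eq_dist_fixedPoint hφ hz hyz, hd.symm]⟩

theorem exists_dist_map_lt (hd : IsUltrametric d) (hsolid : ∀ (γ : Γ) (x : X), ∃ y : X, d x y = γ)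
    {φ : X → X} {z : X} {lam : Ordinal} {a : Ordinal → X}
    (happrox : (⋂ ι ∈ Set.Iio lam, {w : X | d (a ι) w ≤ d (a ι) (φ (a ι))}) = {z})
    {γ : Γ} (hγ : γ ≠ ⊥) : ∃ ι₀ < lam, d (a ι₀) (φ (a ι₀)) < γ := by
  by_contra! hbig
  obtain ⟨w, hw⟩ := hsolid γ z
  have hw_mem : w ∈ ⋂ ι ∈ Set.Iio lam, {w : X | d (a ι) w ≤ d (a ι) (φ (a ι))} :=
    Set.mem_iInter₂.2 fun ι hι => (hd.le_max _ z w).trans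
      (max_le (dist_fixedPoint_le_of_approx happrox hι) (hw ▸ hbig ι hι))
  rw [happrox, Set.mem_singleton_iff] at hw_mem
  exact hγ (hw ▸ hw_mem ▸ hd.dist_self z)

theorem tendstoBelow_of_approx (hd : IsUltrametric d)
    (hsolid : ∀ (γ : Γ) (x : X), ∃ y : X, d x y = γ) {φ : X → X} {z : X}
    {lam : Ordinal} (hlam : Order.IsSuccLimit lam) {a : Ordinal → X}
    (hstep : ∀ ι : Ordinal, ι + 1 < lam → a (ι + 1) = φ (a ι))
    (hdec : ∀ ι κ : Ordinal, ι < κ → κ + 1 < lam →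
      d (a κ) (a (κ + 1)) < d (a ι) (a (ι + 1)))
    (happrox : (⋂ ι ∈ Set.Iio lam, {w : X | d (a ι) w ≤ d (a ι) (φ (a ι))}) = {z}) :
    TendstoBelow d a lam z := by
  intro γ hγ
  obtain ⟨ι₁, hι₁, hsmall⟩ := hd.exists_dist_map_lt hsolid happrox hγ
  refine ⟨ι₁, hι₁, fun ι hle hι => ?_⟩
  calc d z (a ι) = d (a ι) z := hd.symm _ _
    _ ≤ d (a ι) (φ (a ι)) := dist_fixedPoint_le_of_approx happrox hι
    _ ≤ d (a ι₁) (φ (a ι₁)) := dist_map_le_of_le hlam hstep hdec hle hι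
    _ < γ := hsmall

theorem isCauchyBelow_of_tendstoBelow {I : Type*} [Preorder I] (hd : IsUltrametric d)
    {a : I → X} {lam : I} {z : X} (h : TendstoBelow d a lam z) : IsCauchyBelow d a lam := by
  intro γ hγ
  obtain ⟨ι₀, hι₀, hclose⟩ := h γ hγ
  refine ⟨ι₀, hι₀, fun ι κ hle hικ hκ => ?_⟩
  calc d (a ι) (a κ) ≤ max (d (a ι) z) (d z (a κ)) := hd.le_max _ _ _
    _ < γ := max_lt (hd.symm z (a ι) ▸ hclose ι hle (hικ.trans hκ))
      (hclose κ (hle.trans hικ.le) hκ)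

end IsUltrametric

theorem stmt_19_general {X Γ : Type*} [LinearOrder Γ] [OrderBot Γ]
    (d : X → X → Γ)
    (hd1 : ∀ x y : X, d x y = ⊥ ↔ x = y)
    (hd2 : ∀ x y : X, d x y = d y x)
    (hd3 : ∀ x y z : X, d x z ≤ max (d x y) (d y z))
    (hsolid : ∀ (γ : Γ) (x : X), ∃ y : X, d x y = γ)
    (φ : X → X)
    (hφ : ∀ x x' : X, x ≠ x' → d (φ x) (φ x') < d x x')
    (z : X) (hz : φ z = z)
    (lam : Ordinal) (hlam : Order.IsSuccLimit lam) (a : Ordinal → X)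
    (hsucc : ∀ ι : Ordinal, ι + 1 < lam → a (ι + 1) = φ (a ι) ∧ φ (a ι) ≠ a ι)
    (hdec : ∀ ι κ : Ordinal, ι < κ → κ + 1 < lam →
      d (a κ) (a (κ + 1)) < d (a ι) (a (ι + 1)))
    (happrox : (⋂ ι ∈ Set.Iio lam, {w : X | d (a ι) w ≤ d (a ι) (φ (a ι))}) = {z}) :
    ({γ : Γ | ∃ x : X, x ≠ z ∧ d x (φ x) = γ} = {γ : Γ | γ ≠ ⊥}) ∧
    (∀ γ : Γ, γ ≠ ⊥ → ∃ ι₀ < lam, ∀ ι κ : Ordinal, ι₀ ≤ ι → ι < κ → κ < lam →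
      d (a ι) (a κ) < γ) ∧
    (∀ γ : Γ, γ ≠ ⊥ → ∃ ι₁ < lam, ∀ ι : Ordinal, ι₁ ≤ ι → ι < lam →
      d z (a ι) < γ) := by
  have hd : IsUltrametric d := ⟨hd1, hd2, hd3⟩
  have hlimit : TendstoBelow d a lam z :=
    hd.tendstoBelow_of_approx hsolid hlam (fun ι hι => (hsucc ι hι).1) hdec happrox
  exact ⟨hd.displacements_eq hsolid hφ hz, hd.isCauchyBelow_of_tendstoBelow hlimit, hlimit⟩

/-- In a solid principally complete space: Λ_φ = Γ\{0}, every asymptotic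
approximation α to z is a Cauchy family, and z = lim α. -/
theorem stmt_19 {X Γ : Type*} [LinearOrder Γ] [OrderBot Γ]
    (d : X → X → Γ)
    (hd1 : ∀ x y : X, d x y = ⊥ ↔ x = y)
    (hd2 : ∀ x y : X, d x y = d y x)
    (hd3 : ∀ x y z : X, d x z ≤ max (d x y) (d y z))
    (hns : ∀ γ : Γ, γ ≠ ⊥ → ∃ γ' : Γ, γ' ≠ ⊥ ∧ γ' < γ)
    (hsolid : ∀ (γ : Γ) (x : X), ∃ y : X, d x y = γ)
    (hpc : ∀ C : Set (Set X),
      (∀ B ∈ C, ∃ x y : X, x ≠ y ∧ B = {w : X | d x w ≤ d x y}) →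
      IsChain (· ⊆ ·) C → (⋂₀ C).Nonempty)
    (φ : X → X)
    (hφ : ∀ x x' : X, x ≠ x' → d (φ x) (φ x') < d x x')
    (z : X) (hz : φ z = z)
    (lam : Ordinal) (hlam : Order.IsSuccLimit lam) (a : Ordinal → X)
    (hsucc : ∀ ι : Ordinal, ι + 1 < lam → a (ι + 1) = φ (a ι) ∧ φ (a ι) ≠ a ι)
    (hdec : ∀ ι κ : Ordinal, ι < κ → κ + 1 < lam →
      d (a κ) (a (κ + 1)) < d (a ι) (a (ι + 1)))
    (hlim : ∀ μ : Ordinal, Order.IsSuccLimit μ → μ < lam →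
      ∀ ι : Ordinal, ι < μ → d (a μ) (a ι) ≤ d (a ι) (a (ι + 1)))
    (happrox : (⋂ ι ∈ Set.Iio lam, {w : X | d (a ι) w ≤ d (a ι) (φ (a ι))}) = {z}) :
    ({γ : Γ | ∃ x : X, x ≠ z ∧ d x (φ x) = γ} = {γ : Γ | γ ≠ ⊥}) ∧
    (∀ γ : Γ, γ ≠ ⊥ → ∃ ι₀ < lam, ∀ ι κ : Ordinal, ι₀ ≤ ι → ι < κ → κ < lam →
      d (a ι) (a κ) < γ) ∧
    (∀ γ : Γ, γ ≠ ⊥ → ∃ ι₁ < lam, ∀ ι : Ordinal, ι₁ ≤ ι → ι < lam →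
      d z (a ι) < γ) :=
  stmt_19_general d hd1 hd2 hd3 hsolid φ hφ z hz lam hlam a hsucc hdec happrox
end
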